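/- Let I ⊆ ℝ be an open interval containing 0 and let (H, φ) solve the EdGB FLRW system on I. If H(t) > 0 for all t ∈ I and φ'(0) < 0, then for all t ∈ I one has φ'(t) = −3·H(t)^3·exp(φ(t)) − √(9·H(t)^6·exp(2φ(t)) + 6·H(t)^2), and in particular φ'(t) < 0 for all t ∈ I. -/
import Mathlib


/-- The EdGB FLRW system on a set `I ⊆ ℝ`: `H` is continuously differentiable and
`φ` twice continuously differentiable on `I`, and for every `t ∈ I` the Hamiltonian
constraint `3H² − 3e^φ φ' H³ = φ'²/2` and the scalar field equation
`φ'' = −3Hφ' − 3e^φ H²(H² + H')` hold. -/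
def EdGB (H φ : ℝ → ℝ) (I : Set ℝ) : Prop :=
  ContDiffOn ℝ 1 H I ∧ ContDiffOn ℝ 2 φ I ∧
  (∀ t ∈ I, 3 * H t ^ 2 - 3 * Real.exp (φ t) * deriv φ t * H t ^ 3 = (deriv φ t) ^ 2 / 2) ∧
  (∀ t ∈ I, deriv (deriv φ) t =
      -3 * H t * deriv φ t - 3 * Real.exp (φ t) * H t ^ 2 * (H t ^ 2 + deriv H t))

/-- On an open interval `I` containing `0` (endpoints `a < 0 < b` in the extended
reals), if `(H, φ)` solves the EdGB FLRW system on `I`, `H > 0` on `I` and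
`φ'(0) < 0`, then `φ'` is given by the negative branch of the Hamiltonian
constraint throughout `I`; in particular `φ' < 0` on `I`. -/
theorem stmt_1 (a b : EReal) (ha : a < 0) (hb : 0 < b) (H φ : ℝ → ℝ)
    (hsys : EdGB H φ {t : ℝ | a < (t : EReal) ∧ (t : EReal) < b})
    (hH : ∀ t : ℝ, a < (t : EReal) → (t : EReal) < b → 0 < H t)
    (hφ0 : deriv φ 0 < 0) :
    ∀ t : ℝ, a < (t : EReal) → (t : EReal) < b →
      deriv φ t = -3 * H t ^ 3 * Real.exp (φ t)
          - Real.sqrt ((3 * H t ^ 3 * Real.exp (φ t)) ^ 2 + 6 * H t ^ 2)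
        ∧ deriv φ t < 0 := by
  unfold EdGB at hsys
  obtain ⟨hH1, hφ2, hcon, -⟩ := hsys
  set I : Set ℝ := {t : ℝ | a < (t : EReal) ∧ (t : EReal) < b} with hIdef
  have hIopen : IsOpen I := by
    have : I = (fun t : ℝ => (t : EReal)) ⁻¹' (Set.Ioo a b) := rfl
    rw [this]
    exact isOpen_Ioo.preimage continuous_coe_real_ereal
  have hpre : IsPreconnected I := by
    apply Set.OrdConnected.isPreconnected
    constructor
    rintro x ⟨hx1, hx2⟩ y ⟨hy1, hy2⟩ z ⟨hz1, hz2⟩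
    exact ⟨lt_of_lt_of_le hx1 (EReal.coe_le_coe_iff.mpr hz1),
      lt_of_le_of_lt (EReal.coe_le_coe_iff.mpr hz2) hy2⟩
  have h0I : (0 : ℝ) ∈ I := by
    constructor <;> simp only [EReal.coe_zero] <;> assumption
  have hcont : ContinuousOn (deriv φ) I :=
    hφ2.continuousOn_deriv_of_isOpen hIopen (by norm_num)
  have hne : ∀ t ∈ I, deriv φ t ≠ 0 := by
    intro t ht h0
    have hc := hcon t ht
    rw [h0] at hc
    have := hH t ht.1 ht.2
    nlinarith
  have hneg : ∀ t ∈ I, deriv φ t < 0 := by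
    intro t ht
    rcases lt_or_gt_of_ne (hne t ht) with h | h
    · exact h
    · exfalso
      have h0 : (0 : ℝ) ∈ Set.Icc (deriv φ 0) (deriv φ t) :=
        ⟨hφ0.le, h.le⟩
      obtain ⟨u, hu, hu0⟩ := hpre.intermediate_value h0I ht hcont h0
      exact hne u hu hu0
  intro t ht1 ht2
  have ht : t ∈ I := ⟨ht1, ht2⟩
  have hd := hneg t ht
  refine ⟨?_, hd⟩
  set A := 3 * H t ^ 3 * Real.exp (φ t) with hA
  set d := deriv φ t with hdd
  have hh : 0 < H t := hH t ht1 ht2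
  have hApos : 0 < A := by positivity
  have hc := hcon t ht
  have hsq : (d + A) ^ 2 = A ^ 2 + 6 * H t ^ 2 := by nlinarith [hc]
  set s := Real.sqrt (A ^ 2 + 6 * H t ^ 2) with hs
  have hsnn : 0 ≤ s := Real.sqrt_nonneg _
  have hs2 : s ^ 2 = A ^ 2 + 6 * H t ^ 2 :=
    Real.sq_sqrt (by positivity)
  have hfac : (d + A - s) * (d + A + s) = 0 := by nlinarith
  rcases mul_eq_zero.mp hfac with h | h
  · exfalso
    have hsA : A < s := by nlinarith
    nlinarith
  · linarith
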